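/- In the reduced normalized chain complex of the simplicial circle S^1 = Δ^1/∂Δ^1, for a nondegenerate surjection u of arity r and degree r−1, the interval-cut coproduct AW(u)(Δ(0,1)) ∈ Ñ_*(S^1)^{⊗r} vanishes unless both (u(1),…,u(r)) and (u(r),…,u(2r−1)) are permutations of (1,…,r), in which case it equals sgn(u(1),…,u(r))·Δ(0,1)^{⊗r}. -/

import Mathlib

/-- The cut points `n_i` for an interval cut of the interval `{0,1}` (the case
of the `1`-simplex): the nondecreasing sequence with `n_i = 0` for `i < j` and
`n_i = 1` for `i ≥ j`. -/
def cutPt (j i : ℕ) : ℕ := if j ≤ i then 1 else 0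

/-- The vertex list of the interval `[n_{i-1}, n_i]` (sequence positions are
1-based here). -/
def ivl (j i : ℕ) : List ℕ := List.range' (cutPt j (i - 1)) (cutPt j i - cutPt j (i - 1) + 1)

/-- The vertex list of the simplex `Δ(C_{(k)})`: the concatenation of the
intervals `[n_{i-1}, n_i]` with `u(i) = k`, for the surjection given by the
list of values `L` (0-based positions). -/
def vlist (L : List ℕ) (k j : ℕ) : List ℕ :=
  (((List.range L.length).filter (fun i => L.getD i 0 == k)).map
    (fun i => ivl j (i + 1))).flatten

/-- Position `i` (0-based) is a caesura of `L`: its value reappears later. -/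
def isCaes (L : List ℕ) (i : ℕ) : Bool := (L.drop (i + 1)).contains (L.getD i 0)

/-- The length of the interval `[n_i, n_{i+1}]` attached to position `i`:
`n_{i+1} − n_i` for a final interval, and `n_{i+1} − n_i + 1` for an inner
interval (one attached to a caesura). -/
def lenI (L : List ℕ) (j i : ℕ) : ℕ :=
  (cutPt j (i + 1) - cutPt j i) + (if isCaes L i then 1 else 0)

/-- The position sign-exponent: each inner interval `[n_{i-1}, n_i]`
contributes `n_i`. -/
def posExp (L : List ℕ) (j : ℕ) : ℕ :=
  ∑ i ∈ Finset.range L.length, if isCaes L i then cutPt j (i + 1) else 0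

/-- The permutation sign-exponent: the Koszul sign of the shuffle taking the
intervals to the order of their values, with the interval lengths as degrees. -/
def permExp (L : List ℕ) (j : ℕ) : ℕ :=
  ∑ i ∈ Finset.range L.length, ∑ i' ∈ Finset.range L.length,
    if i < i' ∧ L.getD i' 0 < L.getD i 0 then lenI L j i * lenI L j i' else 0

/-- The coefficient of `Δ(0,1)^{⊗r}` in the interval cut coproduct
`AW(u)(Δ(0,1)) ∈ Ñ_*(S¹)^{⊗r}`: only terms where every factor `Δ(C_{(k)})`
equals `Δ(0,1)` survive in the reduced normalized chains of the circle
`S¹ = Δ¹/∂Δ¹` (which is spanned by `Δ(0,1)` in positive degree). -/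
def AWcoeff (r : ℕ) (L : List ℕ) : ℤ :=
  ∑ j ∈ Finset.Icc 1 L.length,
    if ∀ k ∈ Finset.Icc 1 r, vlist L k j = [0, 1] then
      (-1 : ℤ) ^ (posExp L j + permExp L j)
    else 0

/-- The number of inversions of a list of values. -/
def invExp (M : List ℕ) : ℕ :=
  ∑ i ∈ Finset.range M.length, ∑ i' ∈ Finset.range M.length,
    if i < i' ∧ M.getD i' 0 < M.getD i 0 then 1 else 0

/-- The signature of a list which is a permutation of `(1, …, r)`. -/
def listSign (M : List ℕ) : ℤ := (-1) ^ invExp M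

/-!
Cutting the 1-simplex at position `j` gives the interval `[0]` at the positions before `j`,
`[0, 1]` at `j` and `[1]` after it, so `Δ(C_{(k)})` is the sorted list with one `0` for each
occurrence of `k` in `(u(1), …, u(j))` and one `1` for each occurrence in `(u(j), …, u(2r−1))`.
All factors are `Δ(0,1)` iff both segments contain every value exactly once, and their lengths
`j` and `2r − j` then force `j = r`. For this cut the caesuras are the positions before `r`, so
every inner interval ends at the vertex `0` (trivial position sign) and the intervals of degree
one are those at positions `1, …, r`: the Koszul sign is the signature of `(u(1), …, u(r))`.
-/

open Finset

lemma cutPt_le_one (j i : ℕ) : cutPt j i ≤ 1 := by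
  unfold cutPt; split_ifs <;> omega

lemma cutPt_mono (j : ℕ) : Monotone (cutPt j) := by
  intro i i' h
  unfold cutPt; split_ifs <;> omega

lemma ivl_succ (j i : ℕ) :
    ivl j (i + 1) = if i + 1 < j then [0] else if i + 1 = j then [0, 1] else [1] := by
  unfold ivl cutPt
  split_ifs <;> first | rfl | omega

lemma count_zero_ivl_succ (j i : ℕ) : (ivl j (i + 1)).count 0 = if i < j then 1 else 0 := by
  rw [ivl_succ]; split_ifs <;> first | rfl | omega

lemma count_one_ivl_succ (j i : ℕ) : (ivl j (i + 1)).count 1 = if j - 1 ≤ i then 1 else 0 := by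
  rw [ivl_succ]; split_ifs <;> first | rfl | omega

lemma mem_ivl_succ {j i x : ℕ} (hx : x ∈ ivl j (i + 1)) : cutPt j i ≤ x ∧ x ≤ cutPt j (i + 1) := by
  have := cutPt_mono j (Nat.le_add_right i 1)
  simp only [ivl, Nat.add_sub_cancel, List.mem_range'_1] at hx
  omega

lemma vlist_pairwise_le (L : List ℕ) (k j : ℕ) : (vlist L k j).Pairwise (· ≤ ·) := by
  refine List.pairwise_flatten.2 ⟨?_, ?_⟩
  · simp only [List.mem_map]
    rintro _ ⟨i, -, rfl⟩
    simpa [ivl] using (List.pairwise_lt_range' (s := cutPt j i) 1).imp le_of_lt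
  · refine List.pairwise_map.2 ((List.pairwise_lt_range.filter _).imp fun hii' x hx y hy => ?_)
    calc x ≤ cutPt j (_ + 1) := (mem_ivl_succ hx).2
      _ ≤ cutPt j _ := cutPt_mono j hii'
      _ ≤ y := (mem_ivl_succ hy).1

lemma le_one_of_mem_vlist {L : List ℕ} {k j x : ℕ} (hx : x ∈ vlist L k j) : x ≤ 1 := by
  obtain ⟨_, hl, hxl⟩ := List.mem_flatten.1 hx
  obtain ⟨i, -, rfl⟩ := List.mem_map.1 hl
  exact (mem_ivl_succ hxl).2.trans (cutPt_le_one j _)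

lemma count_take_eq_sum (L : List ℕ) (m k : ℕ) :
    (L.take m).count k = ∑ i ∈ range L.length, if i < m ∧ L.getD i 0 = k then 1 else 0 := by
  induction L generalizing m with
  | nil => simp
  | cons a L ih =>
    cases m with
    | zero => simp
    | succ m =>
      rw [List.take_succ_cons, List.count_cons, ih, List.length_cons, sum_range_succ']
      simp only [Nat.add_lt_add_iff_right, List.getD_cons_succ, List.getD_cons_zero,
        Nat.zero_lt_succ, true_and, beq_iff_eq]

lemma count_drop_eq_sum (L : List ℕ) (m k : ℕ) :
    (L.drop m).count k = ∑ i ∈ range L.length, if m ≤ i ∧ L.getD i 0 = k then 1 else 0 := by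
  induction L generalizing m with
  | nil => simp
  | cons a L ih =>
    rw [List.length_cons, sum_range_succ']
    cases m with
    | zero =>
      have hL := ih 0
      simp only [List.drop_zero, zero_le, true_and] at hL
      simp only [List.drop_zero, List.count_cons, hL, List.getD_cons_succ,
        List.getD_cons_zero, zero_le, true_and, beq_iff_eq]
    | succ m => simp [ih]

lemma count_vlist (L : List ℕ) (k j c : ℕ) :
    (vlist L k j).count c =
      ∑ i ∈ range L.length, if L.getD i 0 = k then (ivl j (i + 1)).count c else 0 := by
  rw [vlist, List.count_flatten, List.map_map,
    ← List.sum_toFinset _ (List.nodup_range.filter _), List.toFinset_filter, List.toFinset_range,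
    sum_filter]
  simp

lemma count_zero_vlist (L : List ℕ) (k j : ℕ) : (vlist L k j).count 0 = (L.take j).count k := by
  rw [count_vlist, count_take_eq_sum]
  refine sum_congr rfl fun i _ => ?_
  rw [count_zero_ivl_succ]
  split_ifs <;> tauto

lemma count_one_vlist (L : List ℕ) (k j : ℕ) :
    (vlist L k j).count 1 = (L.drop (j - 1)).count k := by
  rw [count_vlist, count_drop_eq_sum]
  refine sum_congr rfl fun i _ => ?_
  rw [count_one_ivl_succ]
  split_ifs <;> tauto

lemma vlist_eq_zero_one_iff (L : List ℕ) (k j : ℕ) :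
    vlist L k j = [0, 1] ↔ (L.take j).count k = 1 ∧ (L.drop (j - 1)).count k = 1 := by
  rw [← count_zero_vlist, ← count_one_vlist]
  refine ⟨fun h => by simp [h], fun ⟨h0, h1⟩ => ?_⟩
  refine List.Perm.eq_of_pairwise' (vlist_pairwise_le L k j) (by simp)
    (List.perm_iff_count.2 fun a => ?_)
  match a with
  | 0 => simpa using h0
  | 1 => simpa using h1
  | a + 2 =>
    rw [List.count_eq_zero.2 fun h => by have := le_one_of_mem_vlist h; omega]
    simp

lemma mem_map_succ_range {r k : ℕ} : k ∈ List.map (· + 1) (List.range r) ↔ k ∈ Icc 1 r := by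
  simp only [List.mem_map, List.mem_range, mem_Icc]
  constructor
  · rintro ⟨i, hi, rfl⟩; omega
  · intro hk; exact ⟨k - 1, by omega, by omega⟩

lemma nodup_map_succ_range (r : ℕ) : (List.map (· + 1) (List.range r)).Nodup :=
  List.nodup_range.map (add_left_injective 1)

lemma count_eq_one_of_perm_map_succ_range {r k : ℕ} {l : List ℕ}
    (hp : l.Perm (List.map (· + 1) (List.range r))) (hk : k ∈ Icc 1 r) : l.count k = 1 := by
  rw [hp.count_eq]
  exact List.count_eq_one_of_mem (nodup_map_succ_range r) (mem_map_succ_range.2 hk)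

lemma map_succ_range_subperm {r : ℕ} {l : List ℕ} (h : ∀ k ∈ Icc 1 r, l.count k = 1) :
    (List.map (· + 1) (List.range r)).Subperm l := by
  refine List.subperm_ext_iff.2 fun k hk => ?_
  rw [count_eq_one_of_perm_map_succ_range (List.Perm.refl _) (mem_map_succ_range.1 hk),
    h k (mem_map_succ_range.1 hk)]

lemma vlist_eq_zero_one_iff_perm {r j : ℕ} {L : List ℕ} (hlen : L.length = 2 * r - 1)
    (hj : j ≤ L.length) :
    (∀ k ∈ Icc 1 r, vlist L k j = [0, 1]) ↔
      j = r ∧ (L.take r).Perm (List.map (· + 1) (List.range r)) ∧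
        (L.drop (r - 1)).Perm (List.map (· + 1) (List.range r)) := by
  simp only [vlist_eq_zero_one_iff]
  constructor
  · intro h
    have h0 := map_succ_range_subperm fun k hk => (h k hk).1
    have h1 := map_succ_range_subperm fun k hk => (h k hk).2
    have hjr : j = r := by
      have := h0.length_le
      have := h1.length_le
      simp only [List.length_map, List.length_range, List.length_take, List.length_drop] at *
      omega
    subst hjr
    exact ⟨rfl, (h0.perm_of_length_le (by simp)).symm,
      (h1.perm_of_length_le (by simp; omega)).symm⟩
  · rintro ⟨rfl, h0, h1⟩ k hk
    exact ⟨count_eq_one_of_perm_map_succ_range h0 hk, count_eq_one_of_perm_map_succ_range h1 hk⟩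

lemma isCaes_eq {r i : ℕ} {L : List ℕ} (hp0 : (L.take r).Perm (List.map (· + 1) (List.range r)))
    (hp1 : (L.drop (r - 1)).Perm (List.map (· + 1) (List.range r))) (hi : i < L.length) :
    isCaes L i = decide (i + 1 < r) := by
  rw [isCaes, List.getD_eq_getElem _ _ hi]
  by_cases h : i + 1 < r
  · rw [decide_eq_true h, List.contains_iff_mem]
    have hmem : L[i] ∈ L.drop (r - 1) := by
      rw [hp1.mem_iff, ← hp0.mem_iff, ← List.getElem_take (j := r) (h := by simp; omega)]
      exact List.getElem_mem _
    rw [show r - 1 = i + 1 + (r - 1 - (i + 1)) by omega, ← List.drop_drop] at hmem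
    exact List.drop_subset _ _ hmem
  · rw [decide_eq_false h, Bool.eq_false_iff, Ne, List.contains_iff_mem]
    have hnd : (L.drop i).Nodup := by
      rw [show i = r - 1 + (i - (r - 1)) by omega, ← List.drop_drop]
      exact (hp1.nodup_iff.2 (nodup_map_succ_range r)).sublist (List.drop_sublist _ _)
    rw [List.drop_eq_getElem_cons hi, List.nodup_cons] at hnd
    exact hnd.1

lemma lenI_eq {r i : ℕ} {L : List ℕ} (hp0 : (L.take r).Perm (List.map (· + 1) (List.range r)))
    (hp1 : (L.drop (r - 1)).Perm (List.map (· + 1) (List.range r))) (hi : i < L.length) :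
    lenI L r i = if i < r then 1 else 0 := by
  rw [lenI, isCaes_eq hp0 hp1 hi]
  unfold cutPt
  simp only [decide_eq_true_eq]
  split_ifs <;> omega

lemma posExp_eq_zero {r : ℕ} {L : List ℕ}
    (hp0 : (L.take r).Perm (List.map (· + 1) (List.range r)))
    (hp1 : (L.drop (r - 1)).Perm (List.map (· + 1) (List.range r))) :
    posExp L r = 0 := by
  refine sum_eq_zero fun i hi => ?_
  rw [isCaes_eq hp0 hp1 (mem_range.1 hi)]
  unfold cutPt
  simp only [decide_eq_true_eq]
  split_ifs <;> omega

lemma sum_range_sum_range_ite_lt {M : Type*} [AddCommMonoid M] {m n : ℕ} (hm : m ≤ n)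
    (f : ℕ → ℕ → M) :
    ∑ i ∈ range n, ∑ i' ∈ range n, (if i < m ∧ i' < m then f i i' else 0) =
      ∑ i ∈ range m, ∑ i' ∈ range m, f i i' := by
  have key (g : ℕ → M) : ∑ i ∈ range n, (if i < m then g i else 0) = ∑ i ∈ range m, g i := by
    rw [← sum_filter]
    congr 1
    ext i
    simp only [mem_filter, mem_range]
    omega
  simp only [ite_and, sum_ite_irrel, sum_const_zero, key]

lemma permExp_eq_invExp_take {j m : ℕ} {L : List ℕ} (hm : m ≤ L.length)
    (hlenI : ∀ i < L.length, lenI L j i = if i < m then 1 else 0) :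
    permExp L j = invExp (L.take m) := by
  rw [permExp, invExp, List.length_take_of_le hm, ← sum_range_sum_range_ite_lt hm]
  refine sum_congr rfl fun i hi => sum_congr rfl fun i' hi' => ?_
  have hgetD : ∀ i < m, (L.take m).getD i 0 = L.getD i 0 := fun i hi => by
    simp only [List.getD_eq_getElem?_getD, List.getElem?_take, if_pos hi]
  rw [hlenI i (mem_range.1 hi), hlenI i' (mem_range.1 hi')]
  by_cases hii' : i < m ∧ i' < m
  · simp only [if_pos hii', if_pos hii'.1, if_pos hii'.2, hgetD i hii'.1, hgetD i' hii'.2,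
      mul_one]
  · rw [if_neg hii']
    rcases not_and_or.1 hii' with h | h <;> simp [h]

theorem AW_circle_general (r : ℕ) (hr : 1 ≤ r) (L : List ℕ)
    (hlen : L.length = 2 * r - 1) :
    AWcoeff r L =
      if (L.take r).Perm (List.map (· + 1) (List.range r)) ∧
          (L.drop (r - 1)).Perm (List.map (· + 1) (List.range r)) then
        listSign (L.take r)
      else 0 := by
  have hr_mem : r ∈ Icc 1 L.length := mem_Icc.2 ⟨hr, by omega⟩
  rw [AWcoeff, sum_eq_single_of_mem r hr_mem fun j hj hjr => if_neg fun h =>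
    hjr ((vlist_eq_zero_one_iff_perm hlen (mem_Icc.1 hj).2).1 h).1]
  simp only [vlist_eq_zero_one_iff_perm hlen (mem_Icc.1 hr_mem).2, true_and]
  split_ifs with hp
  · rw [posExp_eq_zero hp.1 hp.2, zero_add,
      permExp_eq_invExp_take (by omega) fun i hi => lenI_eq hp.1 hp.2 hi, listSign]
  · rfl

/-- For a nondegenerate surjection `u` of arity `r` and degree `r−1` (given by
its list of values `L`, of length `2r−1`), the interval cut coproduct
`AW(u)(Δ(0,1)) ∈ Ñ_*(S¹)^{⊗r}` vanishes unless both `(u(1), …, u(r))` and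
`(u(r), …, u(2r−1))` are permutations of `(1, …, r)`, in which case it equals
`sgn(u(1), …, u(r)) · Δ(0,1)^{⊗r}`. -/
theorem AW_circle (r : ℕ) (hr : 1 ≤ r) (L : List ℕ)
    (hlen : L.length = 2 * r - 1)
    (hvals : ∀ a ∈ L, 1 ≤ a ∧ a ≤ r)
    (hsurj : ∀ v, 1 ≤ v → v ≤ r → v ∈ L)
    (hnd : List.Chain' (· ≠ ·) L) :
    AWcoeff r L =
      if (L.take r).Perm (List.map (· + 1) (List.range r)) ∧
          (L.drop (r - 1)).Perm (List.map (· + 1) (List.range r)) then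
        listSign (L.take r)
      else 0 :=
  AW_circle_general r hr L hlen
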